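/- arXiv:2511.13654 — 3 statements merged into one kernel-verified Lean document; each statement's English description precedes it below -/
import Mathlib

section
/- Let E be a real inner product space, f : E → ℝ differentiable at x with gradient g = ∇f(x) ≠ 0, let t ∈ ℝ with c := t − f(x) ≥ 0, and let σ ≥ 0. Assume the curvature upper bound f(x + δ) ≤ f(x) + ⟨g, δ⟩ + (σ/2)‖δ‖² holds for all δ ∈ E. Then every perturbation δ with f(x + δ) ≥ t satisfies ‖δ‖ ≥ c/‖g‖ − 2σc²/‖g‖³. -/
open scoped RealInnerProductSpace

/-- Lower bound on the norm of an adversarial perturbation: under the curvature upper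
bound `f(x + δ) ≤ f(x) + ⟨g, δ⟩ + (σ/2)‖δ‖²` with `g = ∇f(x) ≠ 0`, any perturbation
`δ` raising the loss above the threshold `t` satisfies
`‖δ‖ ≥ c/‖g‖ − 2σc²/‖g‖³`, where `c = t − f(x) ≥ 0`. -/
theorem perturbation_norm_lower_bound
    {E : Type*} [NormedAddCommGroup E] [InnerProductSpace ℝ E] [CompleteSpace E]
    (f : E → ℝ) (x : E) (hfx : DifferentiableAt ℝ f x)
    (hg : gradient f x ≠ 0) (t : ℝ) (hc : 0 ≤ t - f x) (σ : ℝ) (hσ : 0 ≤ σ)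
    (hcurv : ∀ δ : E, f (x + δ) ≤ f x + ⟪gradient f x, δ⟫ + σ / 2 * ‖δ‖ ^ 2) :
    ∀ δ : E, f (x + δ) ≥ t →
      ‖δ‖ ≥ (t - f x) / ‖gradient f x‖ -
        2 * σ * (t - f x) ^ 2 / ‖gradient f x‖ ^ 3 := by
  intro δ hδ
  set g := gradient f x with hgdef
  have hG : 0 < ‖g‖ := norm_pos_iff.mpr hg
  have hinner : ⟪g, δ⟫ ≤ ‖g‖ * ‖δ‖ := real_inner_le_norm g δ
  have h1 : t - f x ≤ ‖g‖ * ‖δ‖ + σ / 2 * ‖δ‖ ^ 2 := by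
    have := hcurv δ
    linarith
  set c := t - f x with hcdef
  set G := ‖g‖ with hGdef
  set r := ‖δ‖ with hrdef
  have hr0 : 0 ≤ r := norm_nonneg _
  by_cases hcase : c / G ≤ r
  · have hpos : 0 ≤ 2 * σ * c ^ 2 / G ^ 3 := by positivity
    linarith
  · push_neg at hcase
    have hGr : G * r < c := by
      have := (lt_div_iff₀ hG).mp hcase
      linarith [mul_comm r G]
    have hr2 : r ^ 2 < (c / G) ^ 2 := by
      apply pow_lt_pow_left₀ hcase hr0
      norm_num
    have key : c - G * r ≤ σ / 2 * (c ^ 2 / G ^ 2) := by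
      have : (c / G) ^ 2 = c ^ 2 / G ^ 2 := by ring
      nlinarith
    rw [ge_iff_le, sub_le_iff_le_add, div_le_iff₀ hG]
    have hd : σ / 2 * (c ^ 2 / G ^ 2) ≤ 2 * σ * c ^ 2 / G ^ 3 * G := by
      rw [show σ / 2 * (c ^ 2 / G ^ 2) = σ * c ^ 2 / (2 * G ^ 2) from by ring,
        show 2 * σ * c ^ 2 / G ^ 3 * G = 2 * σ * c ^ 2 * G / G ^ 3 from by ring,
        div_le_div_iff₀ (by positivity) (by positivity)]
      nlinarith [mul_nonneg (mul_nonneg hσ (sq_nonneg c)) (pow_pos hG 3).le]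
    nlinarith [key, hd]
end

section
/- Let E be a real normed space, Y a type of labels, ℓ : E → Y → ℝ a loss function, and C : E → Y a classifier that is loss-calibrated, i.e., ℓ(z, C(z)) ≤ ℓ(z, y') for all z ∈ E and y' ∈ Y. Assume that for every label y' the map z ↦ ℓ(z, y') is Lipschitz with constant B ≥ 0. Let x, x' ∈ E with ‖x' − x‖ ≤ ε, and let y ∈ Y satisfy C(x) = y, C(x') ≠ y, and ℓ(x, y') ≥ m for every y' ≠ y. Then ℓ(x, y) ≥ m − 2Bε. -/
/-- If a loss-calibrated classifier correctly classifies `x` as `y` but misclassifies a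
nearby point `x'` (with `‖x' − x‖ ≤ ε`), and every wrong-label benign loss is at least `m`,
then the benign loss on the true label is at least `m − 2Bε`, where `B` is a common
Lipschitz constant of the per-label losses. -/
theorem benign_loss_lower_bound_of_adversarial
    {E : Type*} [NormedAddCommGroup E] [NormedSpace ℝ E] {Y : Type*}
    (ℓ : E → Y → ℝ) (C : E → Y)
    (hcal : ∀ z : E, ∀ y' : Y, ℓ z (C z) ≤ ℓ z y')
    (B : ℝ) (hB : 0 ≤ B)
    (hlip : ∀ y' : Y, LipschitzWith B.toNNReal (fun z => ℓ z y'))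
    (x x' : E) (ε : ℝ) (hε : ‖x' - x‖ ≤ ε)
    (y : Y) (hx : C x = y) (hx' : C x' ≠ y)
    (m : ℝ) (hm : ∀ y' : Y, y' ≠ y → ℓ x y' ≥ m) :
    ℓ x y ≥ m - 2 * B * ε := by
  have hBε : 0 ≤ B * ε := mul_nonneg hB ((norm_nonneg _).trans hε)
  have key : ∀ y' : Y, |ℓ x y' - ℓ x' y'| ≤ B * ε := by
    intro y'
    have h := (hlip y').dist_le_mul x x'
    rw [Real.dist_eq] at h
    calc |ℓ x y' - ℓ x' y'| ≤ ↑B.toNNReal * dist x x' := h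
      _ = B * ‖x' - x‖ := by
          rw [Real.coe_toNNReal B hB, dist_eq_norm, ← norm_neg]; rw [neg_sub]
      _ ≤ B * ε := mul_le_mul_of_nonneg_left hε hB
  have h1 : m ≤ ℓ x (C x') := hm _ hx'
  have h2 : ℓ x (C x') ≤ ℓ x' (C x') + B * ε := by
    have := (abs_le.mp (key (C x'))).2; linarith
  have h3 : ℓ x' (C x') ≤ ℓ x' y := hcal x' y
  have h4 : ℓ x' y ≤ ℓ x y + B * ε := by
    have := (abs_le.mp (key y)).1; linarith
  linarith
end

section
/- Let E be a real normed space, Y a finite label set, and μ a probability measure on E × Y. Let ℓ_F, ℓ_G : E → Y → ℝ be nonnegative losses such that (x,y) ↦ ℓ_F(x,y) and (x,y) ↦ ℓ_G(x,y) are measurable and integrable with respect to μ, and such that for every label y' the maps x ↦ ℓ_F(x,y') and x ↦ ℓ_G(x,y') are Lipschitz with constants B_F and B_G, respectively. Let C_F, C_G : E → Y be loss-calibrated classifiers for ℓ_F and ℓ_G (i.e., ℓ(z, C(z)) ≤ ℓ(z, y') for all z, y'), and let A : E → E be an attack map with ‖A(x) − x‖ ≤ ε for all x. Assume that for μ-almost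 every (x, y): ℓ_F(x, y') ≥ m_F and ℓ_G(x, y') ≥ m_G for every label y' ≠ y, with m_F − 2B_F ε > 0 and m_G − 2B_G ε > 0. Let T = {(x, y) : C_F(x) = y ∧ C_G(x) = y ∧ C_F(A(x)) ≠ y ∧ C_G(A(x)) ≠ y} and assume T is measurable. Then μ(T) ≤ ξ_F/(m_F − 2B_F ε) + ξ_G/(m_G − 2B_G ε), where ξ_F = ∫ ℓ_F(x,y) dμ(x,y) and ξ_G = ∫ ℓ_G(x,y) dμ(x,y) are the empirical risks of the two models. -/
/-!
On the transferability event the prediction `y' := C_F (A x)` at the attacked point differs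
from the true label `y`. Calibration at `A x` together with the Lipschitz bound (applied once
to `y` and once to `y'`) gives `ℓ_F (x, y') ≤ ℓ_F (x, y) + 2 B_F ε`, and the margin
`m_F ≤ ℓ_F (x, y')` then forces `ℓ_F (x, y) ≥ m_F − 2 B_F ε`. Markov's inequality bounds `μ T`
by `ξ_F / (m_F − 2 B_F ε)`, and the second model's term is nonnegative.
-/

open MeasureTheory

def IsLossCalibrated {E Y : Type*} (ℓ : E → Y → ℝ) (C : E → Y) : Prop :=
  ∀ z y, ℓ z (C z) ≤ ℓ z y

theorem IsLossCalibrated.loss_le_loss_add_of_dist_le {E Y : Type*} [PseudoMetricSpace E]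
    {ℓ : E → Y → ℝ} {C : E → Y} (hC : IsLossCalibrated ℓ C) {K : NNReal}
    (hlip : ∀ y, LipschitzWith K (fun x => ℓ x y)) {x x' : E} {ε : ℝ} (hx : dist x' x ≤ ε)
    (y : Y) : ℓ x (C x') ≤ ℓ x y + 2 * K * ε := by
  have close : ∀ y, |ℓ x' y - ℓ x y| ≤ K * ε := fun y => (hlip y).dist_le_mul_of_le hx
  have h₁ := abs_le.1 (close (C x'))
  have h₂ := abs_le.1 (close y)
  linarith [hC x' y]

theorem measureReal_le_integral_div_of_ae_le {α : Type*} [MeasurableSpace α] {μ : Measure α}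
    [IsFiniteMeasure μ] {f : α → ℝ} {s : Set α} {c : ℝ} (hc : 0 < c) (hf₀ : 0 ≤ᵐ[μ] f)
    (hf : Integrable f μ) (hs : ∀ᵐ p ∂μ, p ∈ s → c ≤ f p) :
    μ.real s ≤ (∫ p, f p ∂μ) / c := by
  have hsub : μ.real s ≤ μ.real {p | c ≤ f p} :=
    ENNReal.toReal_mono (measure_ne_top μ _) (measure_mono_ae hs)
  rw [le_div_iff₀ hc, mul_comm]
  exact (mul_le_mul_of_nonneg_left hsub hc.le).trans (mul_meas_ge_le_integral_of_nonneg hf₀ hf c)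

theorem transferability_upper_bound_general
    {E : Type*} [NormedAddCommGroup E] [MeasurableSpace E]
    {Y : Type*} [MeasurableSpace Y]
    (μ : Measure (E × Y)) [IsProbabilityMeasure μ]
    (ℓF ℓG : E → Y → ℝ)
    (hF0 : ∀ x y, 0 ≤ ℓF x y) (hG0 : ∀ x y, 0 ≤ ℓG x y)
    (hFi : Integrable (fun p : E × Y => ℓF p.1 p.2) μ)
    (BF BG : ℝ) (hBF : 0 ≤ BF)
    (hFlip : ∀ y' : Y, LipschitzWith BF.toNNReal (fun x => ℓF x y'))
    (CF CG : E → Y)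
    (hcalF : ∀ z y', ℓF z (CF z) ≤ ℓF z y')
    (A : E → E) (ε : ℝ) (hA : ∀ x, ‖A x - x‖ ≤ ε)
    (mF mG : ℝ)
    (hmargin : ∀ᵐ p ∂μ, ∀ y' : Y, y' ≠ p.2 → ℓF p.1 y' ≥ mF ∧ ℓG p.1 y' ≥ mG)
    (hDF : 0 < mF - 2 * BF * ε) (hDG : 0 < mG - 2 * BG * ε)
    (T : Set (E × Y))
    (hT : T = {p : E × Y | CF p.1 = p.2 ∧ CG p.1 = p.2 ∧
      CF (A p.1) ≠ p.2 ∧ CG (A p.1) ≠ p.2}) :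
    (μ T).toReal ≤
      (∫ p, ℓF p.1 p.2 ∂μ) / (mF - 2 * BF * ε) +
      (∫ p, ℓG p.1 p.2 ∂μ) / (mG - 2 * BG * ε) := by
  have hloss : ∀ᵐ p ∂μ, p ∈ T → mF - 2 * BF * ε ≤ ℓF p.1 p.2 := by
    filter_upwards [hmargin] with p hm hp
    rw [hT] at hp
    have hflip := IsLossCalibrated.loss_le_loss_add_of_dist_le hcalF hFlip (x := p.1)
      (x' := A p.1) ((dist_eq_norm _ _).trans_le (hA p.1)) p.2
    rw [Real.coe_toNNReal BF hBF] at hflip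
    linarith [(hm _ hp.2.2.1).1]
  have hF : μ.real T ≤ (∫ p, ℓF p.1 p.2 ∂μ) / (mF - 2 * BF * ε) :=
    measureReal_le_integral_div_of_ae_le hDF (.of_forall fun p => hF0 p.1 p.2) hFi hloss
  have hG : 0 ≤ (∫ p, ℓG p.1 p.2 ∂μ) / (mG - 2 * BG * ε) :=
    div_nonneg (integral_nonneg fun p => hG0 p.1 p.2) hDG.le
  exact le_add_of_le_of_nonneg hF hG

/-- Transferability upper bound (Proposition 1, Lipschitz form): the probability of the
transferability event is at most the sum of each model's empirical risk divided by its
denominator `m − 2Bε`. -/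
theorem transferability_upper_bound
    {E : Type*} [NormedAddCommGroup E] [NormedSpace ℝ E] [MeasurableSpace E]
    {Y : Type*} [Fintype Y] [MeasurableSpace Y]
    (μ : Measure (E × Y)) [IsProbabilityMeasure μ]
    (ℓF ℓG : E → Y → ℝ)
    (hF0 : ∀ x y, 0 ≤ ℓF x y) (hG0 : ∀ x y, 0 ≤ ℓG x y)
    (hFm : Measurable (fun p : E × Y => ℓF p.1 p.2))
    (hGm : Measurable (fun p : E × Y => ℓG p.1 p.2))
    (hFi : Integrable (fun p : E × Y => ℓF p.1 p.2) μ)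
    (hGi : Integrable (fun p : E × Y => ℓG p.1 p.2) μ)
    (BF BG : ℝ) (hBF : 0 ≤ BF) (hBG : 0 ≤ BG)
    (hFlip : ∀ y' : Y, LipschitzWith BF.toNNReal (fun x => ℓF x y'))
    (hGlip : ∀ y' : Y, LipschitzWith BG.toNNReal (fun x => ℓG x y'))
    (CF CG : E → Y)
    (hcalF : ∀ z y', ℓF z (CF z) ≤ ℓF z y')
    (hcalG : ∀ z y', ℓG z (CG z) ≤ ℓG z y')
    (A : E → E) (ε : ℝ) (hA : ∀ x, ‖A x - x‖ ≤ ε)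
    (mF mG : ℝ)
    (hmargin : ∀ᵐ p ∂μ, ∀ y' : Y, y' ≠ p.2 → ℓF p.1 y' ≥ mF ∧ ℓG p.1 y' ≥ mG)
    (hDF : 0 < mF - 2 * BF * ε) (hDG : 0 < mG - 2 * BG * ε)
    (T : Set (E × Y))
    (hT : T = {p : E × Y | CF p.1 = p.2 ∧ CG p.1 = p.2 ∧
      CF (A p.1) ≠ p.2 ∧ CG (A p.1) ≠ p.2})
    (hTmeas : MeasurableSet T) :
    (μ T).toReal ≤
      (∫ p, ℓF p.1 p.2 ∂μ) / (mF - 2 * BF * ε) +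
      (∫ p, ℓG p.1 p.2 ∂μ) / (mG - 2 * BG * ε) :=
  transferability_upper_bound_general μ ℓF ℓG hF0 hG0 hFi BF BG hBF hFlip CF CG hcalF A ε hA mF mG
    hmargin hDF hDG T hT
end
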